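/- As (x,y,θ) → (0,0,0) in ℝ³, the squared cortical distance admits the second-order expansion d²((x,y,θ), (0,0,0)) = 2σ²π·[ (1/(4σ²) + 2π²/λ²)·x² + (1/(4σ²))·y² + (σ²π²/λ²)·θ² ] + o(x² + y² + θ²). -/

import Mathlib

open MeasureTheory Asymptotics Filter

/-- Rotation of the plane by angle `θ`. -/
noncomputable def rot (θ : ℝ) (w : ℝ × ℝ) : ℝ × ℝ :=
  (w.1 * Real.cos θ - w.2 * Real.sin θ, w.1 * Real.sin θ + w.2 * Real.cos θ)

/-- The mother Gabor filter `ψ₀(u,v) = exp(2πiu/λ)·exp(−(u²+v²)/(2σ²))`. -/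
noncomputable def gaborMother (lam sg : ℝ) (w : ℝ × ℝ) : ℂ :=
  Complex.exp (2 * (Real.pi : ℂ) * Complex.I * (w.1 : ℂ) / (lam : ℂ)) *
    Complex.exp (-(((w.1 ^ 2 + w.2 ^ 2) / (2 * sg ^ 2) : ℝ) : ℂ))

/-- The Gabor filter `ψ_{x,y,θ}(u,v) = ψ₀(R_{−θ}((u,v)−(x,y)))` for `p = (x,y,θ)`. -/
noncomputable def gabor (lam sg : ℝ) (p : ℝ × ℝ × ℝ) (w : ℝ × ℝ) : ℂ :=
  gaborMother lam sg (rot (-p.2.2) (w - (p.1, p.2.1)))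

/-- The cortical distance `d(p,q) = ‖ψ_p − ψ_q‖_{L²}`. -/
noncomputable def cdist (lam sg : ℝ) (p q : ℝ × ℝ × ℝ) : ℝ :=
  Real.sqrt (∫ w : ℝ × ℝ, ‖gabor lam sg p w - gabor lam sg q w‖ ^ 2)

/-! The cross term `∫ ψ_p · conj ψ₀` factors into two one-dimensional Gaussian integrals and equals
`πσ² e^{E(p)} e^{iP(p)}`, while `‖ψ_p‖² = ‖ψ₀‖² = πσ²` in `L²`; hence
`d²(p, 0) = 2πσ² (1 - e^{E(p)} cos P(p))`. Near `p = 0` we have `E = O(‖p‖²)` and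
`P = -2πx/λ + O(‖p‖²)`, so `1 - e^E cos P = -E + P²/2 + o(‖p‖²)`, which is the quadratic form. -/

open Complex (I)
open scoped Real ComplexConjugate Topology

lemma rot_fst_sq_add_snd_sq (θ : ℝ) (w : ℝ × ℝ) :
    (rot θ w).1 ^ 2 + (rot θ w).2 ^ 2 = w.1 ^ 2 + w.2 ^ 2 := by
  simp only [rot]
  linear_combination (w.1 ^ 2 + w.2 ^ 2) * Real.sin_sq_add_cos_sq θ

lemma gabor_apply (lam sg : ℝ) (p : ℝ × ℝ × ℝ) (w : ℝ × ℝ) :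
    gabor lam sg p w =
      Complex.exp
          (↑(2 * π / lam * ((w.1 - p.1) * Real.cos p.2.2 + (w.2 - p.2.1) * Real.sin p.2.2)) * I) *
        ↑(Real.exp (-((w.1 - p.1) ^ 2 + (w.2 - p.2.1) ^ 2) / (2 * sg ^ 2))) := by
  rw [gabor, gaborMother, rot_fst_sq_add_snd_sq, Complex.ofReal_exp]
  simp only [rot, Prod.fst_sub, Prod.snd_sub, Real.cos_neg, Real.sin_neg]
  push_cast
  ring_nf

lemma norm_gabor (lam sg : ℝ) (p : ℝ × ℝ × ℝ) (w : ℝ × ℝ) :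
    ‖gabor lam sg p w‖ = Real.exp (-((w.1 - p.1) ^ 2 + (w.2 - p.2.1) ^ 2) / (2 * sg ^ 2)) := by
  rw [gabor_apply, norm_mul, Complex.norm_exp_ofReal_mul_I, one_mul, Complex.norm_real,
    Real.norm_of_nonneg (Real.exp_pos _).le]

lemma norm_gabor_eq (lam sg : ℝ) (p : ℝ × ℝ × ℝ) (w : ℝ × ℝ) :
    ‖gabor lam sg p w‖ = ‖gabor lam sg (0, 0, 0) (w - (p.1, p.2.1))‖ := by
  simp [norm_gabor]

noncomputable def gaborFactor (s a k m t : ℝ) : ℂ :=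
  Complex.exp (↑(k * (t - a) - m * t) * I) * ↑(Real.exp (-((t - a) ^ 2 + t ^ 2) / (2 * s ^ 2)))

lemma gaborFactor_eq_cexp_quadratic (s a k m t : ℝ) :
    gaborFactor s a k m t =
      Complex.exp (((-1 / s ^ 2 : ℝ) : ℂ) * t ^ 2 +
        (((a / s ^ 2 : ℝ) : ℂ) + ((k - m : ℝ) : ℂ) * I) * t +
        (((-(a ^ 2 / (2 * s ^ 2)) : ℝ) : ℂ) - ((k * a : ℝ) : ℂ) * I)) := by
  rw [gaborFactor, Complex.ofReal_exp, ← Complex.exp_add]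
  congr 1
  push_cast
  field_simp
  ring

lemma ofReal_neg_one_div_sq_re_neg {s : ℝ} (hs : s ≠ 0) : ((-1 / s ^ 2 : ℝ) : ℂ).re < 0 := by
  rw [Complex.ofReal_re]
  exact div_neg_of_neg_of_pos (by norm_num) (by positivity)

lemma integrable_gaborFactor (s a k m : ℝ) (hs : s ≠ 0) : Integrable (gaborFactor s a k m) := by
  simp_rw [funext (gaborFactor_eq_cexp_quadratic s a k m)]
  exact integrable_cexp_quadratic' (ofReal_neg_one_div_sq_re_neg hs) _ _

lemma integral_gaborFactor (s a k m : ℝ) (hs : 0 < s) :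
    ∫ t, gaborFactor s a k m t =
      ↑(√π * s * Real.exp (-(a ^ 2 / (4 * s ^ 2)) - s ^ 2 * (k - m) ^ 2 / 4)) *
        Complex.exp (↑(-(a * (k + m) / 2)) * I) := by
  simp_rw [gaborFactor_eq_cexp_quadratic s a k m]
  rw [integral_cexp_quadratic (ofReal_neg_one_div_sq_re_neg hs.ne')]
  have hroot : (↑π / -((-1 / s ^ 2 : ℝ) : ℂ) : ℂ) ^ (1 / 2 : ℂ) = ↑(√π * s) := by
    rw [show (↑π / -((-1 / s ^ 2 : ℝ) : ℂ) : ℂ) = ↑(π * s ^ 2) by push_cast; field_simp,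
      show (1 / 2 : ℂ) = ↑(1 / 2 : ℝ) by norm_num, ← Complex.ofReal_cpow (by positivity),
      ← Real.sqrt_eq_rpow, Real.sqrt_mul Real.pi_pos.le, Real.sqrt_sq hs.le]
  rw [hroot, Complex.ofReal_mul (√π * s), Complex.ofReal_exp, mul_assoc, ← Complex.exp_add]
  have hs' : (s : ℂ) ≠ 0 := Complex.ofReal_ne_zero.2 hs.ne'
  congr 2
  push_cast
  field_simp
  ring_nf
  simp only [Complex.I_sq]
  ring

lemma gabor_mul_conj_gabor_zero (lam sg : ℝ) (p : ℝ × ℝ × ℝ) (w : ℝ × ℝ) :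
    gabor lam sg p w * conj (gabor lam sg (0, 0, 0) w) =
      gaborFactor sg p.1 (2 * π / lam * Real.cos p.2.2) (2 * π / lam) w.1 *
        gaborFactor sg p.2.1 (2 * π / lam * Real.sin p.2.2) 0 w.2 := by
  simp only [gabor_apply, gaborFactor, Complex.ofReal_exp, ← Complex.exp_conj, ← Complex.exp_add]
  congr 1
  simp only [map_add, map_mul, Complex.conj_ofReal, Complex.conj_I]
  push_cast
  simp only [Complex.cos_zero, Complex.sin_zero]
  ring

noncomputable def gaborOverlapDecay (lam sg : ℝ) (p : ℝ × ℝ × ℝ) : ℝ :=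
  -((p.1 ^ 2 + p.2.1 ^ 2) / (4 * sg ^ 2)) - 2 * sg ^ 2 * π ^ 2 * (1 - Real.cos p.2.2) / lam ^ 2

noncomputable def gaborOverlapPhase (lam : ℝ) (p : ℝ × ℝ × ℝ) : ℝ :=
  -(π * (p.1 * (1 + Real.cos p.2.2) + p.2.1 * Real.sin p.2.2) / lam)

lemma integrable_gabor_mul_conj_gabor_zero (lam sg : ℝ) (hsg : sg ≠ 0) (p : ℝ × ℝ × ℝ) :
    Integrable fun w => gabor lam sg p w * conj (gabor lam sg (0, 0, 0) w) := by
  simp_rw [gabor_mul_conj_gabor_zero, Measure.volume_eq_prod]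
  exact (integrable_gaborFactor _ _ _ _ hsg).mul_prod (integrable_gaborFactor _ _ _ _ hsg)

lemma integral_gabor_mul_conj_gabor_zero (lam sg : ℝ) (hsg : 0 < sg) (p : ℝ × ℝ × ℝ) :
    ∫ w, gabor lam sg p w * conj (gabor lam sg (0, 0, 0) w) =
      ↑(π * sg ^ 2 * Real.exp (gaborOverlapDecay lam sg p)) *
        Complex.exp (↑(gaborOverlapPhase lam p) * I) := by
  simp_rw [gabor_mul_conj_gabor_zero, Measure.volume_eq_prod]
  rw [integral_prod_mul, integral_gaborFactor _ _ _ _ hsg, integral_gaborFactor _ _ _ _ hsg]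
  rw [mul_mul_mul_comm, ← Complex.ofReal_mul, ← Complex.exp_add]
  congr 2
  · rw [mul_mul_mul_comm, ← Real.exp_add, mul_mul_mul_comm, Real.mul_self_sqrt Real.pi_pos.le,
      ← sq, gaborOverlapDecay]
    congr 2
    linear_combination (-(sg ^ 2 * π ^ 2 / lam ^ 2)) * Real.sin_sq_add_cos_sq p.2.2
  · rw [gaborOverlapPhase]
    push_cast
    ring

lemma Complex.sq_norm_eq_re_mul_conj (z : ℂ) : ‖z‖ ^ 2 = (z * conj z).re := by
  rw [Complex.mul_conj', ← Complex.ofReal_pow, Complex.ofReal_re]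

lemma integrable_norm_gabor_sq (lam sg : ℝ) (hsg : sg ≠ 0) (p : ℝ × ℝ × ℝ) :
    Integrable fun w => ‖gabor lam sg p w‖ ^ 2 := by
  simp_rw [norm_gabor_eq lam sg p, Complex.sq_norm_eq_re_mul_conj]
  exact (integrable_gabor_mul_conj_gabor_zero lam sg hsg (0, 0, 0)).re.comp_sub_right _

lemma integral_norm_gabor_sq (lam sg : ℝ) (hsg : 0 < sg) (p : ℝ × ℝ × ℝ) :
    ∫ w, ‖gabor lam sg p w‖ ^ 2 = π * sg ^ 2 := by
  have hre : ∫ w, (gabor lam sg (0, 0, 0) w * conj (gabor lam sg (0, 0, 0) w)).re =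
      (∫ w, gabor lam sg (0, 0, 0) w * conj (gabor lam sg (0, 0, 0) w)).re :=
    integral_re (integrable_gabor_mul_conj_gabor_zero lam sg hsg.ne' (0, 0, 0))
  simp_rw [norm_gabor_eq lam sg p, Complex.sq_norm_eq_re_mul_conj]
  rw [integral_sub_right_eq_self
      (fun w => (gabor lam sg (0, 0, 0) w * conj (gabor lam sg (0, 0, 0) w)).re), hre,
    integral_gabor_mul_conj_gabor_zero lam sg hsg, Complex.re_ofReal_mul]
  simp [gaborOverlapDecay, gaborOverlapPhase]

lemma cdist_sq_zero (lam sg : ℝ) (hsg : 0 < sg) (p : ℝ × ℝ × ℝ) :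
    cdist lam sg p (0, 0, 0) ^ 2 =
      2 * π * sg ^ 2 *
        (1 - Real.exp (gaborOverlapDecay lam sg p) * Real.cos (gaborOverlapPhase lam p)) := by
  have hcross := integrable_gabor_mul_conj_gabor_zero lam sg hsg.ne' p
  have hnorm := integrable_norm_gabor_sq lam sg hsg.ne'
  have hre : ∫ w, (gabor lam sg p w * conj (gabor lam sg (0, 0, 0) w)).re =
      (∫ w, gabor lam sg p w * conj (gabor lam sg (0, 0, 0) w)).re :=
    integral_re hcross
  have hcross_re :
      Integrable fun w => 2 * (gabor lam sg p w * conj (gabor lam sg (0, 0, 0) w)).re :=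
    hcross.re.const_mul 2
  have hsum : Integrable fun w => ‖gabor lam sg p w‖ ^ 2 + ‖gabor lam sg (0, 0, 0) w‖ ^ 2 :=
    (hnorm p).add (hnorm (0, 0, 0))
  have hpoint (w : ℝ × ℝ) : ‖gabor lam sg p w - gabor lam sg (0, 0, 0) w‖ ^ 2 =
      ‖gabor lam sg p w‖ ^ 2 + ‖gabor lam sg (0, 0, 0) w‖ ^ 2 -
        2 * (gabor lam sg p w * conj (gabor lam sg (0, 0, 0) w)).re := by
    simp only [Complex.sq_norm, Complex.normSq_sub]
  rw [cdist, Real.sq_sqrt (integral_nonneg fun _ => by positivity), funext hpoint,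
    integral_sub hsum hcross_re,
    integral_add (hnorm p) (hnorm (0, 0, 0)),
    integral_const_mul, hre, integral_gabor_mul_conj_gabor_zero lam sg hsg,
    integral_norm_gabor_sq lam sg hsg, integral_norm_gabor_sq lam sg hsg,
    Complex.re_ofReal_mul, Complex.exp_ofReal_mul_I_re]
  ring

lemma Real.exp_sub_one_sub_isLittleO :
    (fun t => Real.exp t - 1 - t) =o[𝓝 0] (fun t => t) := by
  simpa [Finset.sum_range_succ, sub_add_eq_sub_sub] using
    Real.exp_sub_sum_range_succ_isLittleO_pow 1

lemma Real.one_sub_cos_isBigO : (fun t => 1 - Real.cos t) =O[⊤] (fun t => t ^ 2) :=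
  isBigO_of_le' (c := 1 / 2) _ fun t => by
    rw [Real.norm_of_nonneg (by linarith [Real.cos_le_one t]), Real.norm_of_nonneg (sq_nonneg t)]
    linarith [Real.one_sub_sq_div_two_le_cos (x := t)]

lemma Real.one_sub_cos_sub_isLittleO :
    (fun t => 1 - Real.cos t - t ^ 2 / 2) =o[𝓝 0] (fun t => t ^ 2) := by
  refine IsBigO.trans_isLittleO (g := fun t => t ^ 4) ?_ (isLittleO_pow_pow (by norm_num))
  refine .of_bound (5 / 96) ?_
  filter_upwards [Metric.closedBall_mem_nhds (0 : ℝ) one_pos] with t ht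
  rw [Metric.mem_closedBall, dist_zero_right, Real.norm_eq_abs] at ht
  rw [Real.norm_eq_abs, Real.norm_eq_abs, abs_pow, ← abs_neg, mul_comm]
  convert Real.cos_bound ht using 2
  ring

section Expansion

variable {l : Filter (ℝ × ℝ × ℝ)}

lemma isBigO_fst_norm : (fun p : ℝ × ℝ × ℝ => p.1) =O[l] (fun p => ‖p‖) :=
  isBigO_of_le _ fun p => (norm_fst_le p).trans (norm_norm p).ge

lemma isBigO_snd_fst_norm : (fun p : ℝ × ℝ × ℝ => p.2.1) =O[l] (fun p => ‖p‖) :=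
  isBigO_of_le _ fun p => ((norm_fst_le p.2).trans (norm_snd_le p)).trans (norm_norm p).ge

lemma isBigO_snd_snd_norm : (fun p : ℝ × ℝ × ℝ => p.2.2) =O[l] (fun p => ‖p‖) :=
  isBigO_of_le _ fun p => ((norm_snd_le p.2).trans (norm_snd_le p)).trans (norm_norm p).ge

lemma isBigO_one_sub_cos_snd_snd :
    (fun p : ℝ × ℝ × ℝ => 1 - Real.cos p.2.2) =O[l] (fun p => ‖p‖ ^ 2) :=
  ((Real.one_sub_cos_isBigO.comp_tendsto tendsto_top).mono le_top).trans (isBigO_snd_snd_norm.pow 2)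

lemma gaborOverlapDecay_isBigO (lam sg : ℝ) :
    gaborOverlapDecay lam sg =O[l] (fun p => ‖p‖ ^ 2) := by
  have h := ((((isBigO_fst_norm (l := l)).pow 2).add (isBigO_snd_fst_norm.pow 2)).const_mul_left
    (-(1 / (4 * sg ^ 2)))).sub
      (isBigO_one_sub_cos_snd_snd.const_mul_left (2 * sg ^ 2 * π ^ 2 / lam ^ 2))
  refine h.congr_left fun p => ?_
  rw [gaborOverlapDecay]
  ring

lemma gaborOverlapPhase_isBigO (lam : ℝ) : gaborOverlapPhase lam =O[l] (fun p => ‖p‖) := by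
  have hcos : (fun p : ℝ × ℝ × ℝ => 1 + Real.cos p.2.2) =O[l] (fun _ => (1 : ℝ)) :=
    .of_bound 2 (.of_forall fun p => by
      rw [norm_one, mul_one, Real.norm_eq_abs, abs_le]
      constructor <;> linarith [Real.cos_le_one p.2.2, Real.neg_one_le_cos p.2.2])
  have hsin : (fun p : ℝ × ℝ × ℝ => Real.sin p.2.2) =O[l] (fun _ => (1 : ℝ)) :=
    .of_bound 1 (.of_forall fun p => by simpa using Real.abs_sin_le_one p.2.2)
  have h := (((isBigO_fst_norm (l := l)).mul hcos).add
    (isBigO_snd_fst_norm.mul hsin)).const_mul_left (-(π / lam))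
  simp only [mul_one] at h
  refine h.congr_left fun p => ?_
  rw [gaborOverlapPhase]
  ring

lemma isBigO_norm_sq_sum_sq : (fun p : ℝ × ℝ × ℝ => ‖p‖ ^ 2) =O[l]
    (fun p => p.1 ^ 2 + p.2.1 ^ 2 + p.2.2 ^ 2) := by
  refine isBigO_of_le _ fun p => ?_
  have hN : 0 ≤ p.1 ^ 2 + p.2.1 ^ 2 + p.2.2 ^ 2 := by positivity
  have hcoord (t : ℝ) (ht : t ^ 2 ≤ p.1 ^ 2 + p.2.1 ^ 2 + p.2.2 ^ 2) :
      ‖t‖ ≤ √(p.1 ^ 2 + p.2.1 ^ 2 + p.2.2 ^ 2) := Real.abs_le_sqrt ht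
  have hp : ‖p‖ ≤ √(p.1 ^ 2 + p.2.1 ^ 2 + p.2.2 ^ 2) :=
    norm_prod_le_iff.2 ⟨hcoord _ (by nlinarith), norm_prod_le_iff.2
      ⟨hcoord _ (by nlinarith), hcoord _ (by nlinarith)⟩⟩
  rw [Real.norm_of_nonneg (by positivity), Real.norm_of_nonneg hN]
  exact (Real.le_sqrt (norm_nonneg p) hN).1 hp

end Expansion

lemma gaborOverlapPhase_add_isBigO (lam : ℝ) :
    (fun p => gaborOverlapPhase lam p + 2 * π * p.1 / lam) =O[𝓝 0] (fun p => ‖p‖ ^ 2) := by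
  have hx : (fun p : ℝ × ℝ × ℝ => p.1) =o[𝓝 0] (fun _ => (1 : ℝ)) :=
    (isLittleO_one_iff ℝ).2 (isBigO_fst_norm.trans_tendsto tendsto_norm_zero)
  have hsin : (fun p : ℝ × ℝ × ℝ => Real.sin p.2.2) =O[𝓝 0] (fun p => ‖p‖) :=
    (isBigO_of_le _ fun p => by simpa using Real.abs_sin_le_abs).trans isBigO_snd_snd_norm
  have h := ((hx.mul_isBigO isBigO_one_sub_cos_snd_snd).isBigO.sub
    ((isBigO_snd_fst_norm.mul hsin).congr_right fun p => by ring)).const_mul_left (π / lam)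
  simp only [one_mul] at h
  refine h.congr_left fun p => ?_
  rw [gaborOverlapPhase]
  ring

lemma gaborOverlap_expansion (lam sg : ℝ) :
    (fun p : ℝ × ℝ × ℝ =>
        1 - Real.exp (gaborOverlapDecay lam sg p) * Real.cos (gaborOverlapPhase lam p) -
          ((1 / (4 * sg ^ 2) + 2 * π ^ 2 / lam ^ 2) * p.1 ^ 2 + 1 / (4 * sg ^ 2) * p.2.1 ^ 2 +
            sg ^ 2 * π ^ 2 / lam ^ 2 * p.2.2 ^ 2))
      =o[𝓝 0] (fun p => ‖p‖ ^ 2) := by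
  have hr2 : Tendsto (fun p : ℝ × ℝ × ℝ => ‖p‖ ^ 2) (𝓝 0) (𝓝 0) := by
    simpa using tendsto_norm_zero.pow 2
  have hE := gaborOverlapDecay_isBigO lam sg (l := 𝓝 0)
  have hE0 := hE.trans_tendsto hr2
  have hP := gaborOverlapPhase_isBigO lam (l := 𝓝 0)
  have hP2 := hP.pow 2
  have hexp : (fun p => Real.exp (gaborOverlapDecay lam sg p) - 1 - gaborOverlapDecay lam sg p)
      =o[𝓝 0] (fun p => ‖p‖ ^ 2) :=
    (Real.exp_sub_one_sub_isLittleO.comp_tendsto hE0).trans_isBigO hE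
  have hmixed : (fun p => (Real.exp (gaborOverlapDecay lam sg p) - 1) *
      (1 - Real.cos (gaborOverlapPhase lam p))) =o[𝓝 0] (fun p => ‖p‖ ^ 2) := by
    have hexp1 :
        (fun p => Real.exp (gaborOverlapDecay lam sg p) - 1) =o[𝓝 0] (fun _ => (1 : ℝ)) :=
      (isLittleO_one_iff ℝ).2
        (by simpa using ((Real.continuous_exp.tendsto 0).comp hE0).sub_const 1)
    have hcos := ((Real.one_sub_cos_isBigO.comp_tendsto tendsto_top).mono le_top).trans hP2
    simpa only [one_mul, Function.comp_def] using hexp1.mul_isBigO hcos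
  have hcosP := (Real.one_sub_cos_sub_isLittleO.comp_tendsto
    (hP.trans_tendsto tendsto_norm_zero)).trans_isBigO hP2
  have hphase : (fun p => (gaborOverlapPhase lam p + 2 * π * p.1 / lam) *
      (gaborOverlapPhase lam p - 2 * π * p.1 / lam)) =o[𝓝 0] (fun p => ‖p‖ ^ 2) := by
    have hsub :
        (fun p => gaborOverlapPhase lam p - 2 * π * p.1 / lam) =o[𝓝 0] (fun _ => (1 : ℝ)) :=
      (isLittleO_one_iff ℝ).2 (((hP.sub (isBigO_fst_norm.const_mul_left (2 * π / lam))).congr_left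
        fun p => by ring).trans_tendsto tendsto_norm_zero)
    simpa only [mul_one] using (gaborOverlapPhase_add_isBigO lam).mul_isLittleO hsub
  have hcosθ := (Real.one_sub_cos_sub_isLittleO.comp_tendsto
    (isBigO_snd_snd_norm.trans_tendsto tendsto_norm_zero)).trans_isBigO (isBigO_snd_snd_norm.pow 2)
  -- `1 - e^E cos P - Q = -(e^E - 1 - E) + (e^E - 1)(1 - cos P) + (1 - cos P - P²/2)`
  -- `+ (P + 2πx/λ)(P - 2πx/λ)/2 + (2σ²π²/λ²)(1 - cos θ - θ²/2)`, a ring identity.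
  refine ((((hexp.neg_left.add hmixed).add hcosP).add (hphase.const_mul_left (1 / 2))).add
    (hcosθ.const_mul_left (2 * sg ^ 2 * π ^ 2 / lam ^ 2))).congr_left fun p => ?_
  simp only [Function.comp_def, gaborOverlapDecay, gaborOverlapPhase]
  ring

theorem statement9_general (lam sg : ℝ) (hsg : 0 < sg) :
    (fun p : ℝ × ℝ × ℝ =>
        cdist lam sg p (0, 0, 0) ^ 2 -
          2 * sg ^ 2 * Real.pi *
            ((1 / (4 * sg ^ 2) + 2 * Real.pi ^ 2 / lam ^ 2) * p.1 ^ 2 +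
              1 / (4 * sg ^ 2) * p.2.1 ^ 2 +
              sg ^ 2 * Real.pi ^ 2 / lam ^ 2 * p.2.2 ^ 2))
      =o[nhds (0 : ℝ × ℝ × ℝ)]
      (fun p : ℝ × ℝ × ℝ => p.1 ^ 2 + p.2.1 ^ 2 + p.2.2 ^ 2) := by
  refine (((gaborOverlap_expansion lam sg).const_mul_left (2 * π * sg ^ 2)).trans_isBigO
    isBigO_norm_sq_sum_sq).congr_left fun p => ?_
  rw [cdist_sq_zero lam sg hsg p]
  ring

/-- Second-order expansion of the squared cortical distance at the origin:
`d²((x,y,θ),(0,0,0)) = 2σ²π·[(1/(4σ²)+2π²/λ²)x² + (1/(4σ²))y² + (σ²π²/λ²)θ²]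
  + o(x²+y²+θ²)` as `(x,y,θ) → (0,0,0)`. -/
theorem statement9 (lam sg : ℝ) (hlam : 0 < lam) (hsg : 0 < sg) :
    (fun p : ℝ × ℝ × ℝ =>
        cdist lam sg p (0, 0, 0) ^ 2 -
          2 * sg ^ 2 * Real.pi *
            ((1 / (4 * sg ^ 2) + 2 * Real.pi ^ 2 / lam ^ 2) * p.1 ^ 2 +
              1 / (4 * sg ^ 2) * p.2.1 ^ 2 +
              sg ^ 2 * Real.pi ^ 2 / lam ^ 2 * p.2.2 ^ 2))
      =o[nhds (0 : ℝ × ℝ × ℝ)]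
      (fun p : ℝ × ℝ × ℝ => p.1 ^ 2 + p.2.1 ^ 2 + p.2.2 ^ 2) :=
  statement9_general lam sg hsg
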